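/- In Λ := C⟨x,y⟩/(xy+yx, x³-y²), for scalars λᵢ, the cube of A = λ₁y + λ₂x + λ₃y² + λ₄yx + λ₅x² + λ₆y²x + λ₇yx² + λ₈y²x² equals (λ₂³)y² + (λ₁²λ₂ + 3λ₂²λ₅)y²x + (λ₁λ₂²)yx² + 3(λ₁²λ₅ + λ₂²λ₃ + λ₂λ₅²)y²x². -/

import Mathlib

/-! Since `x` and `y` anticommute and `x³ = y²`, we get `y³ = y x³ = -x³ y = -y³`, so `y³ = 0`
because `2` is invertible. Every word in `x, y` then reduces to `± yᵃ xᵇ` with `a, b ≤ 2` by moving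
the `y`s to the left (one sign per transposition), replacing `x³` by `y²` and dropping `y³`;
expanding the cube and reducing each word gives the formula. -/

open FreeAlgebra

/-- The relations defining Λ = C⟨x,y⟩/(xy+yx, x³-y²), with x = ι ℂ 0 and y = ι ℂ 1. -/
inductive LamRel : FreeAlgebra ℂ (Fin 2) → FreeAlgebra ℂ (Fin 2) → Prop
  | r1 : LamRel (ι ℂ 0 * ι ℂ 1 + ι ℂ 1 * ι ℂ 0) 0
  | r2 : LamRel ((ι ℂ 0) ^ 3 - (ι ℂ 1) ^ 2) 0

noncomputable abbrev Lam := RingQuot LamRel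

noncomputable abbrev lx : Lam := RingQuot.mkAlgHom ℂ LamRel (ι ℂ 0)
noncomputable abbrev ly : Lam := RingQuot.mkAlgHom ℂ LamRel (ι ℂ 1)

section AnticommutingPair

variable {A : Type*} [Ring A] {x y : A}

lemma mul_mul_left_of_anticomm (hxy : x * y = -(y * x)) (z : A) :
    x * (y * z) = -(y * (x * z)) := by
  rw [← mul_assoc, hxy, neg_mul, mul_assoc]

lemma pow_three_eq_zero_of_anticomm (hxy : x * y = -(y * x)) (hx3 : x ^ 3 = y ^ 2)
    (h2 : IsUnit (2 : A)) : y ^ 3 = 0 := by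
  have hneg : y ^ 3 = -y ^ 3 :=
    calc y ^ 3 = y * x ^ 3 := by rw [hx3, ← pow_succ']
      _ = -(x ^ 3 * y) := by
        simp only [pow_succ', pow_zero, mul_one, mul_assoc, hxy, mul_mul_left_of_anticomm hxy,
          mul_neg, neg_neg]
      _ = -y ^ 3 := by rw [hx3, ← pow_succ]
  exact h2.mul_right_eq_zero.mp (by rw [two_mul]; exact eq_neg_iff_add_eq_zero.mp hneg)

lemma mul_mul_mul_eq_zero_of_pow_three_eq_zero (hy3 : y ^ 3 = 0) (z : A) :
    y * (y * (y * z)) = 0 := by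
  simpa only [pow_succ', pow_zero, mul_one, mul_assoc, zero_mul] using congrArg (· * z) hy3

theorem sum_smul_monomials_pow_three {R : Type*} [CommRing R] [Algebra R A]
    (hxy : x * y = -(y * x)) (hx3 : x ^ 3 = y ^ 2) (hy3 : y ^ 3 = 0)
    (l₁ l₂ l₃ l₄ l₅ l₆ l₇ l₈ : R) :
    (l₁ • y + l₂ • x + l₃ • y ^ 2 + l₄ • (y * x) + l₅ • x ^ 2 +
      l₆ • (y ^ 2 * x) + l₇ • (y * x ^ 2) + l₈ • (y ^ 2 * x ^ 2)) ^ 3 =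
    (l₂ ^ 3) • y ^ 2 + (l₁ ^ 2 * l₂ + 3 * l₂ ^ 2 * l₅) • (y ^ 2 * x) +
      (l₁ * l₂ ^ 2) • (y * x ^ 2) +
      (3 * (l₁ ^ 2 * l₅ + l₂ ^ 2 * l₃ + l₂ * l₅ ^ 2)) • (y ^ 2 * x ^ 2) := by
  have hx3' : x * (x * x) = y * y := by simpa only [pow_succ', pow_zero, mul_one] using hx3
  have hy3' : y * (y * y) = 0 := by simpa only [pow_succ', pow_zero, mul_one] using hy3
  simp only [pow_succ', pow_zero, mul_one, mul_add, add_mul, smul_mul_assoc, mul_smul_comm,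
    mul_assoc]
  simp only [hxy, mul_mul_left_of_anticomm hxy, hx3', hy3',
    mul_mul_mul_eq_zero_of_pow_three_eq_zero hy3, mul_neg, smul_neg, neg_neg, mul_zero, smul_zero,
    add_zero, zero_add]
  module

end AnticommutingPair

lemma lx_mul_ly : lx * ly = -(ly * lx) :=
  eq_neg_of_add_eq_zero_left <| by simpa using RingQuot.mkAlgHom_rel ℂ LamRel.r1

lemma lx_pow_three : lx ^ 3 = ly ^ 2 :=
  sub_eq_zero.mp <| by simpa using RingQuot.mkAlgHom_rel ℂ LamRel.r2

lemma isUnit_two_lam : IsUnit (2 : Lam) := by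
  simpa only [map_ofNat] using
    (isUnit_iff_ne_zero.mpr two_ne_zero : IsUnit (2 : ℂ)).map (algebraMap ℂ Lam)

theorem stmt16 (l₁ l₂ l₃ l₄ l₅ l₆ l₇ l₈ : ℂ) :
    (l₁ • ly + l₂ • lx + l₃ • ly ^ 2 + l₄ • (ly * lx) + l₅ • lx ^ 2 +
      l₆ • (ly ^ 2 * lx) + l₇ • (ly * lx ^ 2) + l₈ • (ly ^ 2 * lx ^ 2)) ^ 3 =
    (l₂ ^ 3) • ly ^ 2 + (l₁ ^ 2 * l₂ + 3 * l₂ ^ 2 * l₅) • (ly ^ 2 * lx) +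
      (l₁ * l₂ ^ 2) • (ly * lx ^ 2) +
      (3 * (l₁ ^ 2 * l₅ + l₂ ^ 2 * l₃ + l₂ * l₅ ^ 2)) • (ly ^ 2 * lx ^ 2) :=
  sum_smul_monomials_pow_three lx_mul_ly lx_pow_three
    (pow_three_eq_zero_of_anticomm lx_mul_ly lx_pow_three isUnit_two_lam) _ _ _ _ _ _ _ _
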